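/- Let M be a graph with girth greater than k and let G be its line graph. If T is a set of at most k edges of M that induces a 2-connected subgraph of G and is not contained in any single star Star(v), then T contains two vertex-disjoint edges of M. -/

import Mathlib

/-!
If every two edges of `T` met, then `T` would be a pairwise intersecting family of edges that is
not a star. Such a family always contains a triangle, while `3 ≤ |T| ≤ k < girth M` (the lower
bound because a 2-connected graph has at least three vertices) makes `M` triangle-free.
-/

/-- A graph is 2-vertex-connected: it has at least 3 vertices and removing any
single vertex leaves it connected. -/
def TwoConnected {V : Type*} (G : SimpleGraph V) : Prop :=
  3 ≤ Nat.card V ∧ ∀ v : V, (G.induce ({v}ᶜ : Set V)).Connected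

/-- The line graph of `M`: vertices are the edges of `M`, two distinct edges
are adjacent iff they share an endpoint. -/
def lineGraph {V : Type*} (M : SimpleGraph V) : SimpleGraph M.edgeSet where
  Adj e f := e ≠ f ∧ ∃ v : V, v ∈ (e : Sym2 V) ∧ v ∈ (f : Sym2 V)
  symm := ⟨fun e f ⟨h, v, h1, h2⟩ => ⟨h.symm, v, h2, h1⟩⟩
  loopless := ⟨fun e h => h.1 rfl⟩

namespace SimpleGraph

variable {V : Type*} {M : SimpleGraph V}

theorem cliqueFree_three_of_three_lt_girth (h : 3 < M.girth) : M.CliqueFree 3 := by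
  intro s hs
  obtain ⟨u, w, hw, hlen⟩ := is3Clique_iff_exists_cycle_length_three.mp ⟨s, hs⟩
  have := girth_le_length hw
  omega

theorem CliqueFree.exists_common_vertex_of_pairwise_meet (hM : M.CliqueFree 3)
    {S : Set (Sym2 V)} (hSM : S ⊆ M.edgeSet) (hS : S.Nonempty)
    (hmeet : ∀ e ∈ S, ∀ f ∈ S, ∃ v, v ∈ e ∧ v ∈ f) :
    ∃ v, ∀ e ∈ S, v ∈ e := by
  classical
  obtain ⟨⟨a, b⟩, hab⟩ := hS
  by_contra! hnot
  obtain ⟨g, hg, hag⟩ := hnot a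
  obtain ⟨h, hh, hbh⟩ := hnot b
  have hbg : b ∈ g := by
    obtain ⟨v, hv, hvg⟩ := hmeet _ hab g hg
    rcases Sym2.mem_iff.mp hv with rfl | rfl
    exacts [absurd hvg hag, hvg]
  have hah : a ∈ h := by
    obtain ⟨v, hv, hvh⟩ := hmeet _ hab h hh
    rcases Sym2.mem_iff.mp hv with rfl | rfl
    exacts [hvh, absurd hvh hbh]
  obtain ⟨c, rfl⟩ := Sym2.mem_iff_exists.mp hbg
  obtain ⟨d, rfl⟩ := Sym2.mem_iff_exists.mp hah
  -- `g = s(b, c)` and `h = s(a, d)` can only meet in `c = d`, closing the triangle `a b c`.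
  have hcd : c = d := by
    obtain ⟨v, hvg, hvh⟩ := hmeet _ hg _ hh
    rcases Sym2.mem_iff.mp hvg with rfl | rfl
    · exact absurd hvh hbh
    rcases Sym2.mem_iff.mp hvh with rfl | rfl
    exacts [absurd hvg hag, rfl]
  subst hcd
  exact hM {a, b, c} (is3Clique_triple_iff.mpr ⟨hSM hab, hSM hh, hSM hg⟩)

end SimpleGraph

theorem stmt_4 {V : Type*} (k : ℕ) (M : SimpleGraph V)
    (hgirth : (k : ℕ∞) < M.girth)
    (T : Set M.edgeSet) (hT : T.ncard ≤ k)
    (h2conn : TwoConnected ((lineGraph M).induce T))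
    (hstar : ¬ ∃ v : V, ∀ e ∈ T, v ∈ (e : Sym2 V)) :
    ∃ e f : M.edgeSet, e ∈ T ∧ f ∈ T ∧
      ∀ v : V, v ∈ (e : Sym2 V) → v ∉ (f : Sym2 V) := by
  by_contra! hmeet
  have hcard : 3 ≤ T.ncard := by simpa only [Nat.card_coe_set_eq] using h2conn.1
  have hM : M.CliqueFree 3 :=
    SimpleGraph.cliqueFree_three_of_three_lt_girth (hcard.trans_lt (hT.trans_lt (by exact_mod_cast hgirth)))
  have hne : T.Nonempty := Set.nonempty_of_ncard_ne_zero (by omega)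
  obtain ⟨v, hv⟩ := hM.exists_common_vertex_of_pairwise_meet (S := (↑) '' T)
    (by rintro _ ⟨e, -, rfl⟩; exact e.2) (hne.image _)
    (by rintro _ ⟨e, he, rfl⟩ _ ⟨f, hf, rfl⟩; exact hmeet e f he hf)
  exact hstar ⟨v, fun e he => hv e ⟨e, he, rfl⟩⟩
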